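/- arXiv:2408.10881 — 2 statements merged into one kernel-verified Lean document; each statement's English description precedes it below -/
import Mathlib

section
/- There exist an absolute constant C > 0 and an integer d₀ such that for every integer d ≥ d₀ there is κ > 0 with the following property: for every positive integer N there exists a set A ⊆ [N] with |A| ≥ κ · N^{1/2 − C/(log d)^{1/2}} containing no non-trivial solutions to the equation x₁ + x₂ + d·x₃ + d·x₄ = 2y₁ + 2d·y₂. -/
/-!
Take a three-term-progression-free set `B ⊆ [0, m)` of Behrend size `m·exp(-4√(log m))` with
`m = ⌊d/2⌋`, and let `A` consist of the numbers whose base-`M` digits all lie in `B`, where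
`M = (4d + 4)m + 1` exceeds `∑ |cᵢ| · m`. Then a solution in `A` produces no carries, so it is a
solution digit by digit; since `|a₀ + a₁ - 2a₄| < d`, each digit equation splits into
`a₀ + a₁ = 2a₄` and `a₂ + a₃ = 2a₅`, which only have trivial solutions in `B`. Finally
`|A| = |B|^k ≈ N^{log |B| / log M}`, and `log |B| / log M ≥ 1/2 - 3/√(log d)` once `log d ≥ 36`.
-/

open Finset Real

theorem Int.eq_zero_of_sum_mul_pow_eq_zero {M : ℤ} :
    ∀ {k : ℕ} (s : Fin k → ℤ), (∀ j, |s j| < M) → ∑ j, s j * M ^ (j : ℕ) = 0 → s = 0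
  | 0, s, _, _ => funext fun j => j.elim0
  | k + 1, s, hs, h => by
    rw [Fin.sum_univ_succ] at h
    have hsplit : s 0 + M * ∑ j : Fin k, s j.succ * M ^ (j : ℕ) = 0 := by
      rw [← h, mul_sum]
      simp only [Fin.val_zero, pow_zero, mul_one, Fin.val_succ, pow_succ]
      congr 1
      exact sum_congr rfl fun j _ => by ring
    have hM : M ≠ 0 := ((abs_nonneg _).trans_lt (hs 0)).ne'
    have h0 : s 0 = 0 :=
      Int.eq_zero_of_abs_lt_dvd ⟨-∑ j : Fin k, s j.succ * M ^ (j : ℕ), by linarith⟩ (hs 0)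
    have htail := Int.eq_zero_of_sum_mul_pow_eq_zero (fun j => s j.succ) (fun j => hs j.succ)
      (by simpa [h0, hM] using hsplit)
    funext j
    exact Fin.cases h0 (fun j => congrFun htail j) j

def digitValue (M : ℕ) {k : ℕ} (f : Fin k → ℕ) : ℤ := ∑ j, (f j : ℤ) * (M : ℤ) ^ (j : ℕ)

lemma digitValue_nonneg (M : ℕ) {k : ℕ} (f : Fin k → ℕ) : 0 ≤ digitValue M f := by
  unfold digitValue; positivity

lemma digitValue_lt {M k : ℕ} {f : Fin k → ℕ} (hf : ∀ j, f j < M) :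
    digitValue M f < (M : ℤ) ^ k := by
  have hle : digitValue M f ≤ ∑ j : Fin k, ((M : ℤ) - 1) * (M : ℤ) ^ (j : ℕ) :=
    sum_le_sum fun j _ => mul_le_mul_of_nonneg_right (by have := hf j; omega) (by positivity)
  have hgeom : ∑ j : Fin k, ((M : ℤ) - 1) * (M : ℤ) ^ (j : ℕ) = (M : ℤ) ^ k - 1 := by
    rw [Fin.sum_univ_eq_sum_range (fun j => ((M : ℤ) - 1) * (M : ℤ) ^ j), ← mul_sum, mul_comm,
      geom_sum_mul]
  omega

lemma digitValue_injOn {M k : ℕ} : Set.InjOn (digitValue M (k := k)) {f | ∀ j, f j < M} := by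
  intro f hf g hg hfg
  have hzero := Int.eq_zero_of_sum_mul_pow_eq_zero (M := M) (fun j => (f j : ℤ) - g j)
    (fun j => by have := hf j; have := hg j; rw [abs_sub_lt_iff]; omega)
    (by simp only [digitValue] at hfg; simp [sub_mul, sum_sub_distrib, hfg])
  funext j
  exact_mod_cast sub_eq_zero.1 (congrFun hzero j)

/-- Digits below `m` combined with weights `c` cannot carry when `∑ |cᵢ| · m < M`. -/
lemma sum_mul_digit_eq_zero {ι : Type*} [Fintype ι] {c : ι → ℤ} {M m k : ℕ}
    {f : ι → Fin k → ℕ} (hf : ∀ i j, f i j < m) (hM : (∑ i, |c i|) * m < M)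
    (h : ∑ i, c i * digitValue M (f i) = 0) : ∀ j, ∑ i, c i * f i j = 0 := by
  refine congrFun (Int.eq_zero_of_sum_mul_pow_eq_zero (M := M) _ (fun j => ?_) ?_)
  · calc |∑ i, c i * f i j| ≤ ∑ i, |c i| * m := by
          refine (abs_sum_le_sum_abs _ _).trans (sum_le_sum fun i _ => ?_)
          rw [abs_mul, Nat.abs_cast]
          exact mul_le_mul_of_nonneg_left (by exact_mod_cast (hf i j).le) (abs_nonneg _)
      _ < M := by rwa [← sum_mul]
  · simp only [digitValue, mul_sum] at h
    rw [← h, sum_comm]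
    simp only [sum_mul, mul_assoc]

/-- The shift by `1` puts the set inside `[1, M ^ k]`. -/
def digitSet (B : Finset ℕ) (M k : ℕ) : Finset ℤ :=
  (Fintype.piFinset fun _ : Fin k => B).image fun f => 1 + digitValue M f

lemma card_digitSet {B : Finset ℕ} {M : ℕ} (hBM : B ⊆ range M) (k : ℕ) :
    (digitSet B M k).card = B.card ^ k := by
  rw [digitSet, card_image_of_injOn, Fintype.card_piFinset, prod_const, card_univ,
    Fintype.card_fin]
  intro f hf g hg hfg
  exact digitValue_injOn (fun j => mem_range.1 (hBM (Fintype.mem_piFinset.1 hf j)))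
    (fun j => mem_range.1 (hBM (Fintype.mem_piFinset.1 hg j))) (add_left_cancel hfg)

lemma digitSet_subset_Icc {B : Finset ℕ} {M : ℕ} (hBM : B ⊆ range M) (k : ℕ) :
    digitSet B M k ⊆ Icc 1 ((M : ℤ) ^ k) := by
  intro x hx
  obtain ⟨f, hf, rfl⟩ := mem_image.1 hx
  have := digitValue_nonneg M f
  have := digitValue_lt fun j => mem_range.1 (hBM (Fintype.mem_piFinset.1 hf j))
  rw [mem_Icc]; omega

def IsTrivialSolution {n : ℕ} (c v : Fin n → ℤ) : Prop :=
  ∀ α : ℤ, ∑ i ∈ univ.filter (fun i => v i = α), c i = 0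

def HasOnlyTrivialSolutions {n : ℕ} (c : Fin n → ℤ) (A : Finset ℤ) : Prop :=
  ∀ v : Fin n → ℤ, (∀ i, v i ∈ A) → ∑ i, c i * v i = 0 → IsTrivialSolution c v

def eqnCoeffs (d : ℤ) : Fin 6 → ℤ := ![1, 1, d, d, -2, -2 * d]

lemma sum_eqnCoeffs (d : ℤ) : ∑ i, eqnCoeffs d i = 0 := by
  rw [Fin.sum_univ_six]
  change 1 + 1 + d + d + -2 + -2 * d = 0
  ring

lemma sum_abs_eqnCoeffs {d : ℤ} (hd : 0 ≤ d) : ∑ i, |eqnCoeffs d i| = 4 * d + 4 := by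
  rw [Fin.sum_univ_six]
  change |1| + |1| + |d| + |d| + |-2| + |-2 * d| = 4 * d + 4
  rw [abs_mul, abs_of_nonneg hd, abs_neg, abs_one, abs_two]
  ring

lemma isTrivialSolution_eqnCoeffs (d : ℤ) {v : Fin 6 → ℤ} (h1 : v 1 = v 0) (h4 : v 4 = v 0)
    (h3 : v 3 = v 2) (h5 : v 5 = v 2) : IsTrivialSolution (eqnCoeffs d) v := by
  intro α
  simp only [sum_filter, Fin.sum_univ_six, h1, h3, h4, h5]
  split_ifs <;> simp [eqnCoeffs] <;> ring

/-- Since `d` exceeds `|a₀ + a₁ - 2a₄|`, the equation splits into `a₀ + a₁ = 2a₄` and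
`a₂ + a₃ = 2a₅`. -/
lemma eq_of_sum_eqnCoeffs_mul_eq_zero {B : Finset ℕ} (hB : ThreeAPFree (B : Set ℕ)) {m d : ℕ}
    (hBm : B ⊆ range m) (hmd : 2 * m ≤ d + 1) {a : Fin 6 → ℕ} (ha : ∀ i, a i ∈ B)
    (h : ∑ i, eqnCoeffs d i * a i = 0) : a 1 = a 0 ∧ a 4 = a 0 ∧ a 3 = a 2 ∧ a 5 = a 2 := by
  have hlt : ∀ i, a i < m := fun i => mem_range.1 (hBm (ha i))
  rw [Fin.sum_univ_six] at h
  change 1 * (a 0 : ℤ) + 1 * a 1 + d * a 2 + d * a 3 + -2 * a 4 + -2 * d * a 5 = 0 at h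
  have hu : (a 0 : ℤ) + a 1 - 2 * a 4 = 0 := by
    refine Int.eq_zero_of_abs_lt_dvd (m := d) ⟨-(a 2 + a 3 - 2 * a 5), by linarith⟩ ?_
    have := hlt 0; have := hlt 1; have := hlt 4
    rw [abs_lt]; constructor <;> omega
  have hw : (d : ℤ) * (a 2 + a 3 - 2 * a 5) = 0 := by linarith
  have hd : (d : ℤ) ≠ 0 := by have := hlt 0; omega
  have hw' := (mul_eq_zero.1 hw).resolve_left hd
  have h01 := threeAPFree_iff_eq_right.1 hB (ha 0) (ha 4) (ha 1) (by omega)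
  have h23 := threeAPFree_iff_eq_right.1 hB (ha 2) (ha 5) (ha 3) (by omega)
  omega

lemma hasOnlyTrivialSolutions_digitSet {B : Finset ℕ} (hB : ThreeAPFree (B : Set ℕ))
    {m d M : ℕ} (hBm : B ⊆ range m) (hmd : 2 * m ≤ d + 1) (hM : (4 * d + 4) * m < M) (k : ℕ) :
    HasOnlyTrivialSolutions (eqnCoeffs d) (digitSet B M k) := by
  intro v hv heq
  choose f hfB hfv using fun i => mem_image.1 (hv i)
  have hlt : ∀ i j, f i j < m := fun i j => mem_range.1 (hBm (Fintype.mem_piFinset.1 (hfB i) j))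
  have hdigits := sum_mul_digit_eq_zero (c := eqnCoeffs d) hlt
    (by rw [sum_abs_eqnCoeffs (Nat.cast_nonneg d)]; exact_mod_cast hM)
    (by simpa [← hfv, mul_add, sum_add_distrib, ← sum_mul, sum_eqnCoeffs] using heq)
  have hcol := fun j => eq_of_sum_eqnCoeffs_mul_eq_zero hB hBm hmd
    (fun i => Fintype.mem_piFinset.1 (hfB i) j) (hdigits j)
  have hv_eq : ∀ i i', (∀ j, f i j = f i' j) → v i = v i' := fun i i' h => by
    rw [← hfv, ← hfv, funext h]
  exact isTrivialSolution_eqnCoeffs d (hv_eq 1 0 fun j => (hcol j).1)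
    (hv_eq 4 0 fun j => (hcol j).2.1) (hv_eq 3 2 fun j => (hcol j).2.2.1)
    (hv_eq 5 2 fun j => (hcol j).2.2.2)

lemma behrend_exponent_nonneg {L : ℝ} (hL : 36 ≤ L) : 0 ≤ 1 / 2 - 3 / √L := by
  have : 6 ≤ √L := le_sqrt_of_sq_le (by linarith)
  rw [sub_nonneg, div_le_iff₀ (by positivity)]
  linarith

lemma behrend_exponent_mul_le {L ℓ l : ℝ} (hL : 36 ≤ L) (hℓ : L - 3 ≤ ℓ) (hℓL : ℓ ≤ L)
    (hl : l ≤ 2 * L + 2) : (1 / 2 - 3 / √L) * l ≤ ℓ - 4 * √ℓ := by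
  set x := √L
  have hx : 6 ≤ x := le_sqrt_of_sq_le (by linarith)
  have hxL : x ^ 2 = L := sq_sqrt (by linarith)
  have hℓx : √ℓ ≤ x := sqrt_le_sqrt hℓL
  calc (1 / 2 - 3 / x) * l ≤ (1 / 2 - 3 / x) * (2 * x ^ 2 + 2) := by
        rw [hxL]; exact mul_le_mul_of_nonneg_left hl (behrend_exponent_nonneg hL)
    _ = x ^ 2 - 6 * x + 1 - 6 / x := by field_simp; ring
    _ ≤ L - 3 - 4 * x := by rw [← hxL]; nlinarith [show 0 < 6 / x by positivity]
    _ ≤ ℓ - 4 * √ℓ := by linarith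

lemma rpow_le_rothNumberNat {d : ℕ} (hd : exp 36 ≤ d) :
    (((4 * d + 4) * (d / 2) + 1 : ℕ) : ℝ) ^ (1 / 2 - 3 / √(log d)) ≤ rothNumberNat (d / 2) := by
  set m := d / 2
  set M := (4 * d + 4) * m + 1
  have hL : 36 ≤ log d := (le_log_iff_exp_le (by linarith [exp_pos 36])).2 hd
  have hd3 : (3 : ℝ) ≤ d := by linarith [add_one_le_exp 36]
  have hm : (d : ℝ) / 4 ≤ m := by
    have : (d : ℝ) ≤ 2 * m + 1 := by exact_mod_cast (by omega : d ≤ 2 * m + 1)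
    linarith
  have hm0 : (0 : ℝ) < m := by linarith
  have hmd : (m : ℝ) ≤ d := by exact_mod_cast Nat.div_le_self d 2
  have hMd : (M : ℝ) ≤ 3 * d ^ 2 := by
    have : (2 * m : ℝ) ≤ d := by exact_mod_cast (by omega : 2 * m ≤ d)
    simp only [M]; push_cast; nlinarith
  have hlogm : log d - 3 ≤ log m := by
    have h4 : log 4 ≤ 3 := by linarith [log_le_sub_one_of_pos (by norm_num : (0 : ℝ) < 4)]
    have := log_le_log (by positivity) hm
    rw [log_div (by positivity) (by norm_num)] at this
    linarith
  have hlogM : log M ≤ 2 * log d + 2 := by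
    have h3 : log 3 ≤ 2 := by linarith [log_le_sub_one_of_pos (by norm_num : (0 : ℝ) < 3)]
    have := log_le_log (by positivity) hMd
    rw [log_mul (by norm_num) (by positivity), log_pow] at this
    push_cast at this
    linarith
  calc (M : ℝ) ^ (1 / 2 - 3 / √(log d))
      = exp ((1 / 2 - 3 / √(log d)) * log M) := by
        rw [rpow_def_of_pos (by positivity), mul_comm]
    _ ≤ exp (log m - 4 * √(log m)) :=
        exp_le_exp.2 (behrend_exponent_mul_le hL hlogm (log_le_log hm0 hmd) hlogM)
    _ = m * exp (-4 * √(log m)) := by rw [sub_eq_add_neg, exp_add, exp_log hm0, neg_mul]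
    _ ≤ rothNumberNat m := Behrend.roth_lower_bound

lemma rpow_neg_mul_rpow_le_pow_log {M N : ℕ} (hM : 1 < M) {θ r : ℝ} (hθ : 0 ≤ θ)
    (hr : (M : ℝ) ^ θ ≤ r) : (M : ℝ) ^ (-θ) * (N : ℝ) ^ θ ≤ r ^ Nat.log M N := by
  have hM0 : (0 : ℝ) < M := by positivity
  have hN : (N : ℝ) ≤ (M : ℝ) ^ (Nat.log M N + 1) := by
    exact_mod_cast (Nat.lt_pow_succ_log_self hM N).le
  calc (M : ℝ) ^ (-θ) * (N : ℝ) ^ θ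
      ≤ (M : ℝ) ^ (-θ) * ((M : ℝ) ^ (Nat.log M N + 1)) ^ θ := by gcongr
    _ = ((M : ℝ) ^ θ) ^ Nat.log M N := by
      rw [← rpow_natCast, ← rpow_mul hM0.le, ← rpow_add hM0, ← rpow_natCast, ← rpow_mul hM0.le]
      push_cast; ring_nf
    _ ≤ r ^ Nat.log M N := by gcongr

/-- There are an absolute constant `C > 0` and an integer `d₀` such that for every
`d ≥ d₀` there is `κ > 0` with: for every positive integer `N` there is `A ⊆ [N]` with
`|A| ≥ κ·N^{1/2 − C/(log d)^{1/2}}` containing no non-trivial solutions (every solution with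
entries in `A` is trivial, coefficients `(1,1,d,d,−2,−2d)`) to
`x₁ + x₂ + d·x₃ + d·x₄ = 2y₁ + 2d·y₂`. -/
theorem statement18 :
    ∃ C : ℝ, 0 < C ∧ ∃ d₀ : ℕ, ∀ d : ℕ, d₀ ≤ d →
      ∃ κ : ℝ, 0 < κ ∧ ∀ N : ℕ, 0 < N → ∃ A : Finset ℤ,
        A ⊆ Finset.Icc 1 (N : ℤ) ∧
        κ * (N : ℝ) ^ ((1 : ℝ) / 2 - C / (Real.log d) ^ ((1 : ℝ) / 2)) ≤ A.card ∧
        ∀ v : Fin 6 → ℤ, (∀ i, v i ∈ A) →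
          (∑ i, ![(1 : ℤ), 1, (d : ℤ), (d : ℤ), -2, -2 * (d : ℤ)] i * v i) = 0 →
          ∀ α : ℤ, (∑ i ∈ Finset.univ.filter (fun i => v i = α),
            ![(1 : ℤ), 1, (d : ℤ), (d : ℤ), -2, -2 * (d : ℤ)] i) = 0 := by
  refine ⟨3, by norm_num, ⌈exp 36⌉₊, fun d hd => ?_⟩
  have hd' : exp 36 ≤ d := Nat.ceil_le.1 hd
  have hd3 : 3 ≤ d := by exact_mod_cast (by linarith [add_one_le_exp 36] : (3 : ℝ) ≤ d)
  have hθ := behrend_exponent_nonneg ((le_log_iff_exp_le (by linarith [exp_pos 36])).2 hd')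
  obtain ⟨B, hBm, hBcard, hB⟩ := rothNumberNat_spec (d / 2)
  set M := (4 * d + 4) * (d / 2) + 1
  have hBM : B ⊆ range M :=
    hBm.trans (range_subset_range.2 (le_add_right (Nat.le_mul_of_pos_left _ (by omega))))
  have hM : 1 < M := Nat.lt_add_of_pos_left (Nat.mul_pos (by omega) (by omega))
  simp only [← sqrt_eq_rpow]
  refine ⟨(M : ℝ) ^ (-(1 / 2 - 3 / √(log d))), by positivity, fun N hN =>
    ⟨digitSet B M (Nat.log M N), ?_, ?_,
      hasOnlyTrivialSolutions_digitSet hB hBm (by omega) (by omega) _⟩⟩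
  · exact (digitSet_subset_Icc hBM _).trans
      (Icc_subset_Icc le_rfl (by exact_mod_cast Nat.pow_log_le_self M hN.ne'))
  · rw [card_digitSet hBM, Nat.cast_pow, hBcard]
    exact rpow_neg_mul_rpow_le_pow_log hM hθ (rpow_le_rothNumberNat hd')
end

section
/- Let a₁,…,a_k be positive integers, let L be a positive integer, and let A_L ⊆ {0,1,…,L−1} be a set such that (a₁+a₂+⋯+a_k)·max(A_L) < L and A_L contains no non-trivial solutions to the equation a₁x₁ + a₂x₂ + ⋯ + a_kx_k = a₁x₁' + a₂x₂' + ⋯ + a_kx_k'. Then for all integers i₁,…,i_k, j₁,…,j_k, every tuple (x₁,…,x_k,x₁',…,x_k') ∈ A_L^{2k} satisfying (i₁L + a₁)x₁ + ⋯ + (i_kL + a_k)x_k = (j₁L + a₁)x₁' + ⋯ + (j_kL + a_k)x_k' has x_i = x_i' for all i. -/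
/-! Reducing the equation modulo `L` kills the terms `iₜL xₜ` and leaves
`∑ aₜxₜ ≡ ∑ aₜxₜ' (mod L)`. Both sides lie in `[0, L)` because `(∑ aₜ)·max A_L < L`, so the
congruence is an equality, and the hypothesis on `A_L` forces `x = x'`. -/

open Finset

theorem Int.ModEq.eq_of_nonneg_of_lt {a b n : ℤ} (h : a ≡ b [ZMOD n])
    (ha₀ : 0 ≤ a) (ha : a < n) (hb₀ : 0 ≤ b) (hb : b < n) : a = b := by
  rwa [Int.ModEq, Int.emod_eq_of_lt ha₀ ha, Int.emod_eq_of_lt hb₀ hb] at h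

theorem sum_mul_add_mul_modEq {ι : Type*} (s : Finset ι) (I a x : ι → ℤ) (L : ℤ) :
    ∑ i ∈ s, (I i * L + a i) * x i ≡ ∑ i ∈ s, a i * x i [ZMOD L] :=
  Int.ModEq.sum fun i _ => (Int.modEq_iff_dvd.2 ⟨-(I i * x i), by ring⟩)

theorem sum_mul_lt_of_forall_mem {ι : Type*} [Fintype ι] [Nonempty ι] {w : ι → ℤ}
    (hw : ∀ i, 0 ≤ w i) {A : Finset ℤ} {L : ℤ} (hA : ∀ z ∈ A, (∑ i, w i) * z < L)
    {y : ι → ℤ} (hy : ∀ i, y i ∈ A) : ∑ i, w i * y i < L := by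
  obtain ⟨m, -, hm⟩ := exists_max_image univ y univ_nonempty
  calc ∑ i, w i * y i ≤ ∑ i, w i * y m :=
        sum_le_sum fun i _ => mul_le_mul_of_nonneg_left (hm i (mem_univ i)) (hw i)
    _ = (∑ i, w i) * y m := (sum_mul ..).symm
    _ < L := hA _ (hy m)

theorem statement19_general (k : ℕ) (a : Fin k → ℕ) (L : ℕ)
    (AL : Finset ℤ) (hsub : AL ⊆ Finset.Icc 0 ((L : ℤ) - 1))
    (hmax : ∀ x ∈ AL, (∑ i, (a i : ℤ)) * x < (L : ℤ))
    (hsol : ∀ x x' : Fin k → ℤ, (∀ i, x i ∈ AL) → (∀ i, x' i ∈ AL) →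
      ∑ i, (a i : ℤ) * x i = ∑ i, (a i : ℤ) * x' i → x = x') :
    ∀ I J : Fin k → ℤ, ∀ x x' : Fin k → ℤ, (∀ i, x i ∈ AL) → (∀ i, x' i ∈ AL) →
      ∑ i, (I i * (L : ℤ) + (a i : ℤ)) * x i = ∑ i, (J i * (L : ℤ) + (a i : ℤ)) * x' i →
      x = x' := by
  intro I J x x' hx hx' heq
  cases isEmpty_or_nonempty (Fin k)
  · exact Subsingleton.elim x x'
  have hnonneg : ∀ y : Fin k → ℤ, (∀ i, y i ∈ AL) → 0 ≤ ∑ i, (a i : ℤ) * y i := fun y hy =>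
    sum_nonneg fun i _ => mul_nonneg (Int.natCast_nonneg _) (mem_Icc.1 (hsub (hy i))).1
  have hlt : ∀ y : Fin k → ℤ, (∀ i, y i ∈ AL) → ∑ i, (a i : ℤ) * y i < L := fun y hy =>
    sum_mul_lt_of_forall_mem (fun i => Int.natCast_nonneg _) hmax hy
  have hmod : ∑ i, (a i : ℤ) * x i ≡ ∑ i, (a i : ℤ) * x' i [ZMOD L] :=
    (sum_mul_add_mul_modEq _ I _ x L).symm.trans
      (heq ▸ sum_mul_add_mul_modEq _ J _ x' L)
  exact hsol x x' hx hx'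
    (hmod.eq_of_nonneg_of_lt (hnonneg x hx) (hlt x hx) (hnonneg x' hx') (hlt x' hx'))

/-- Let `a₁,…,a_k` be positive integers, `L` positive, and
`A_L ⊆ {0,…,L−1}` with `(a₁+⋯+a_k)·max(A_L) < L` and no non-trivial solutions to
`∑ aᵢxᵢ = ∑ aᵢxᵢ'`. Then for all integers `i₁,…,i_k, j₁,…,j_k`, every tuple from `A_L`
satisfying `∑ (iₜL + aₜ)xₜ = ∑ (jₜL + aₜ)xₜ'` has `x = x'`. -/
theorem statement19 (k : ℕ) (a : Fin k → ℕ) (ha : ∀ i, 0 < a i) (L : ℕ) (hL : 0 < L)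
    (AL : Finset ℤ) (hsub : AL ⊆ Finset.Icc 0 ((L : ℤ) - 1))
    (hmax : ∀ x ∈ AL, (∑ i, (a i : ℤ)) * x < (L : ℤ))
    (hsol : ∀ x x' : Fin k → ℤ, (∀ i, x i ∈ AL) → (∀ i, x' i ∈ AL) →
      ∑ i, (a i : ℤ) * x i = ∑ i, (a i : ℤ) * x' i → x = x') :
    ∀ I J : Fin k → ℤ, ∀ x x' : Fin k → ℤ, (∀ i, x i ∈ AL) → (∀ i, x' i ∈ AL) →
      ∑ i, (I i * (L : ℤ) + (a i : ℤ)) * x i = ∑ i, (J i * (L : ℤ) + (a i : ℤ)) * x' i →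
      x = x' :=
  statement19_general k a L AL hsub hmax hsol
end
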